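/- Let c ≤ 0 and let μ be a real number with μ² = −4c. On U = {(x,y) ∈ ℝ² : x > 0}, consider the Milne–Pinney vector fields X₁ = (0,−x), X₂ = (−x/2, y/2), X₃ = (y, c/x³) and the vector field Y = (1, y/x + μ/x²). Then the Lie brackets satisfy [X₁,Y] = 0, [X₂,Y] = (1/2)·Y, and [X₃,Y] = −((μ+xy)/x²)·Y on U. Hence the one-dimensional distribution spanned by Y is invariant under the Vessiot–Guldberg Lie algebra of the Milne–Pinney equations, which is therefore imprimitive when c ≤ 0. -/

import Mathlib

namespace Stmt16

/-- Lie bracket of planar vector fields: [X,Y](p) = DY(p)·X(p) − DX(p)·Y(p). -/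
noncomputable def lb (X Y : ℝ × ℝ → ℝ × ℝ) : ℝ × ℝ → ℝ × ℝ :=
  fun p => fderiv ℝ Y p (X p) - fderiv ℝ X p (Y p)

/-- Milne–Pinney vector fields X₁ = −x∂_y, X₂ = ½(y∂_y − x∂ₓ), X₃ = y∂ₓ + (c/x³)∂_y. -/
def X1 : ℝ × ℝ → ℝ × ℝ := fun p => (0, -p.1)
noncomputable def X2 : ℝ × ℝ → ℝ × ℝ := fun p => (-p.1 / 2, p.2 / 2)
noncomputable def X3 (c : ℝ) : ℝ × ℝ → ℝ × ℝ := fun p => (p.2, c / p.1 ^ 3)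

/-- The vector field Y = ∂ₓ + (y/x + μ/x²)∂_y. -/
noncomputable def Y (μ : ℝ) : ℝ × ℝ → ℝ × ℝ :=
  fun p => (1, p.2 / p.1 + μ / p.1 ^ 2)

theorem fderiv_X1_apply (p v : ℝ × ℝ) : fderiv ℝ X1 p v = (0, -v.1) := by
  have h : HasFDerivAt X1 ((0 : ℝ × ℝ →L[ℝ] ℝ).prod (-ContinuousLinearMap.fst ℝ ℝ ℝ)) p :=
    (hasFDerivAt_const 0 p).prodMk (hasFDerivAt_fst (𝕜 := ℝ) (p := p)).neg
  simp [h.fderiv]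

theorem fderiv_X2_apply (p v : ℝ × ℝ) : fderiv ℝ X2 p v = (-v.1 / 2, v.2 / 2) := by
  have h : HasFDerivAt X2 _ p :=
    (((hasDerivAt_id p.1).neg.div_const 2).comp_hasFDerivAt p
        (hasFDerivAt_fst (𝕜 := ℝ) (p := p))).prodMk
      (((hasDerivAt_id p.2).div_const 2).comp_hasFDerivAt p (hasFDerivAt_snd (𝕜 := ℝ) (p := p)))
  simp [h.fderiv, div_eq_inv_mul]

theorem fderiv_X3_apply (c : ℝ) {p : ℝ × ℝ} (hp : p.1 ≠ 0) (v : ℝ × ℝ) :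
    fderiv ℝ (X3 c) p v = (v.2, -3 * c * v.1 / p.1 ^ 4) := by
  have h : HasFDerivAt (X3 c) _ p :=
    (hasFDerivAt_snd (𝕜 := ℝ) (p := p)).prodMk
      (((hasDerivAt_const p.1 c).div (hasDerivAt_pow 3 p.1) (pow_ne_zero 3 hp)).comp_hasFDerivAt
        p (hasFDerivAt_fst (𝕜 := ℝ) (p := p)))
  simp [h.fderiv]
  field_simp

theorem fderiv_Y_apply (μ : ℝ) {p : ℝ × ℝ} (hp : p.1 ≠ 0) (v : ℝ × ℝ) :
    fderiv ℝ (Y μ) p v = (0, v.2 / p.1 - (p.2 / p.1 ^ 2 + 2 * μ / p.1 ^ 3) * v.1) := by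
  have h : HasFDerivAt (Y μ) _ p :=
    (hasFDerivAt_const 1 p).prodMk
      (((hasFDerivAt_snd (𝕜 := ℝ) (p := p)).mul
          ((hasDerivAt_inv hp).comp_hasFDerivAt p (hasFDerivAt_fst (𝕜 := ℝ) (p := p)))).add
        (((hasDerivAt_const p.1 μ).div (hasDerivAt_pow 2 p.1) (pow_ne_zero 2 hp)).comp_hasFDerivAt
          p (hasFDerivAt_fst (𝕜 := ℝ) (p := p))))
  simp [h.fderiv]
  field_simp
  ring

theorem lb_X1_Y (μ : ℝ) {p : ℝ × ℝ} (hp : p.1 ≠ 0) : lb X1 (Y μ) p = 0 := by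
  simp only [lb, fderiv_Y_apply μ hp, fderiv_X1_apply, X1, Y]
  ext <;> simp only [Prod.fst_sub, Prod.snd_sub, Prod.fst_zero, Prod.snd_zero] <;>
    field_simp <;> ring

theorem lb_X2_Y (μ : ℝ) {p : ℝ × ℝ} (hp : p.1 ≠ 0) :
    lb X2 (Y μ) p = (1 / 2 : ℝ) • Y μ p := by
  simp only [lb, fderiv_Y_apply μ hp, fderiv_X2_apply, X2, Y]
  ext <;> simp only [Prod.fst_sub, Prod.snd_sub, Prod.smul_fst, Prod.smul_snd, smul_eq_mul] <;>
    field_simp <;> ring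

theorem lb_X3_Y {c μ : ℝ} (hμ : μ ^ 2 = -4 * c) {p : ℝ × ℝ} (hp : p.1 ≠ 0) :
    lb (X3 c) (Y μ) p = (-((μ + p.1 * p.2) / p.1 ^ 2)) • Y μ p := by
  -- With 4c = -μ², the `∂_y`-component of the bracket is the perfect square -(μ + xy)²/x⁴.
  obtain rfl : c = -μ ^ 2 / 4 := by linarith
  simp only [lb, fderiv_Y_apply μ hp, fderiv_X3_apply _ hp, X3, Y]
  ext <;> simp only [Prod.fst_sub, Prod.snd_sub, Prod.smul_fst, Prod.smul_snd, smul_eq_mul] <;>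
    field_simp <;> ring

theorem stmt_16_general (c μ : ℝ) (hμ : μ ^ 2 = -4 * c) :
    ∀ p ∈ {p : ℝ × ℝ | p.1 > 0},
      lb X1 (Y μ) p = 0 ∧
      lb X2 (Y μ) p = (1 / 2 : ℝ) • Y μ p ∧
      lb (X3 c) (Y μ) p = (-((μ + p.1 * p.2) / p.1 ^ 2)) • Y μ p :=
  fun _ hp => ⟨lb_X1_Y μ hp.ne', lb_X2_Y μ hp.ne', lb_X3_Y hμ hp.ne'⟩

/-- For c ≤ 0 and μ² = −4c, on {x > 0} one has [X₁,Y] = 0, [X₂,Y] = ½Y and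
[X₃,Y] = −((μ+xy)/x²)·Y: the distribution spanned by Y is invariant under the
Vessiot–Guldberg Lie algebra of the Milne–Pinney equations, which is therefore
imprimitive when c ≤ 0. -/
theorem stmt_16 (c μ : ℝ) (hc : c ≤ 0) (hμ : μ ^ 2 = -4 * c) :
    ∀ p ∈ {p : ℝ × ℝ | p.1 > 0},
      lb X1 (Y μ) p = 0 ∧
      lb X2 (Y μ) p = (1 / 2 : ℝ) • Y μ p ∧
      lb (X3 c) (Y μ) p = (-((μ + p.1 * p.2) / p.1 ^ 2)) • Y μ p :=
  stmt_16_general c μ hμ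

end Stmt16
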